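/- Let D and D' be self-adjoint operators on a Hilbert space H with D' = D + B for a bounded operator B. If both (1 + D^2)^{-1} and D·(1 + D^2)^{-1} are compact, then D'·(1 + D'^2)^{-1} is compact. -/

import Mathlib

variable {H : Type*} [NormedAddCommGroup H] [InnerProductSpace ℂ H] [CompleteSpace H]

/-- `R` is the bounded operator `(1 + D^2)⁻¹`. -/
def IsResolventOfOnePlusSq (D : H →ₗ.[ℂ] H) (R : H →L[ℂ] H) : Prop :=
  ∀ y : H, ∃ (h1 : R y ∈ D.domain) (h2 : D ⟨R y, h1⟩ ∈ D.domain),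
    R y + D ⟨D ⟨R y, h1⟩, h2⟩ = y

/-- `S` is the bounded operator `D · (1 + D^2)⁻¹`, where `R = (1 + D^2)⁻¹`. -/
def IsDTimesResolvent (D : H →ₗ.[ℂ] H) (R S : H →L[ℂ] H) : Prop :=
  ∀ y : H, ∃ h1 : R y ∈ D.domain, S y = D ⟨R y, h1⟩

/-!
Since `D` is symmetric, so are `R` and `S`, and on the domain of `D` one has `R D = S` and
`R + S D = 1`. Applying the latter to `u = S' z` and using `D u = z - R' z - B u` and
`D (R' z) = u - B (R' z)` yields `S' = R B R' + S (1 - B S')`: compact operators composed with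
bounded ones.
-/

open scoped InnerProductSpace

theorem IsSelfAdjoint.isFormalAdjoint_self {𝕜 E : Type*} [RCLike 𝕜] [NormedAddCommGroup E]
    [InnerProductSpace 𝕜 E] [CompleteSpace E] {D : E →ₗ.[𝕜] E} (hD : IsSelfAdjoint D) :
    D.IsFormalAdjoint D := by
  have h := LinearPMap.adjoint_isFormalAdjoint hD.dense_domain
  rwa [LinearPMap.isSelfAdjoint_def.mp hD] at h

section SymmetricOperator

variable {E : Type*} [NormedAddCommGroup E] [InnerProductSpace ℂ E] {D : E →ₗ.[ℂ] E}
  (hD : D.IsFormalAdjoint D) {R S : E →L[ℂ] E}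

include hD

theorem IsResolventOfOnePlusSq.isSymmetric (hR : IsResolventOfOnePlusSq D R) :
    (R : E →ₗ[ℂ] E).IsSymmetric := by
  intro y z
  obtain ⟨hy₁, hy₂, hy⟩ := hR y
  obtain ⟨hz₁, hz₂, hz⟩ := hR z
  calc ⟪R y, z⟫_ℂ = ⟪R y, R z + D ⟨D ⟨R z, hz₁⟩, hz₂⟩⟫_ℂ := by rw [hz]
    _ = ⟪R y, R z⟫_ℂ + ⟪D ⟨D ⟨R y, hy₁⟩, hy₂⟩, R z⟫_ℂ := by
        rw [inner_add_right, hD ⟨D ⟨R y, hy₁⟩, hy₂⟩ ⟨R z, hz₁⟩,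
          hD ⟨R y, hy₁⟩ ⟨D ⟨R z, hz₁⟩, hz₂⟩]
    _ = ⟪y, R z⟫_ℂ := by rw [← inner_add_left, hy]

theorem IsDTimesResolvent.isSymmetric (hR : IsResolventOfOnePlusSq D R)
    (hS : IsDTimesResolvent D R S) : (S : E →ₗ[ℂ] E).IsSymmetric := by
  intro y z
  obtain ⟨hy₁, hy₂, hy⟩ := hR y
  obtain ⟨hz₁, hz₂, hz⟩ := hR z
  obtain ⟨_, hSy⟩ := hS y
  obtain ⟨_, hSz⟩ := hS z
  calc ⟪S y, z⟫_ℂ = ⟪D ⟨R y, hy₁⟩, R z + D ⟨D ⟨R z, hz₁⟩, hz₂⟩⟫_ℂ := by rw [hSy, hz]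
    _ = ⟪R y + D ⟨D ⟨R y, hy₁⟩, hy₂⟩, D ⟨R z, hz₁⟩⟫_ℂ := by
        rw [inner_add_right, inner_add_left, hD ⟨R y, hy₁⟩ ⟨R z, hz₁⟩,
          hD ⟨D ⟨R y, hy₁⟩, hy₂⟩ ⟨D ⟨R z, hz₁⟩, hz₂⟩]
    _ = ⟪y, S z⟫_ℂ := by rw [hy, hSz]

theorem IsDTimesResolvent.resolvent_apply_apply (hR : IsResolventOfOnePlusSq D R)
    (hS : IsDTimesResolvent D R S) (w : D.domain) : R (D w) = S w := by
  refine ext_inner_right ℂ fun t => ?_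
  obtain ⟨ht, hSt⟩ := hS t
  calc ⟪R (D w), t⟫_ℂ = ⟪D w, R t⟫_ℂ := (hR.isSymmetric hD).apply_clm _ _
    _ = ⟪(w : E), S t⟫_ℂ := by rw [hD w ⟨R t, ht⟩, hSt]
    _ = ⟪S w, t⟫_ℂ := ((hS.isSymmetric hD hR).apply_clm _ _).symm

theorem IsDTimesResolvent.resolvent_add_apply_apply (hR : IsResolventOfOnePlusSq D R)
    (hS : IsDTimesResolvent D R S) (u : D.domain) : R u + S (D u) = u := by
  refine ext_inner_right ℂ fun t => ?_
  obtain ⟨ht₁, ht₂, ht⟩ := hR t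
  obtain ⟨_, hSt⟩ := hS t
  calc ⟪R u + S (D u), t⟫_ℂ = ⟪(u : E), R t⟫_ℂ + ⟪D u, D ⟨R t, ht₁⟩⟫_ℂ := by
        rw [inner_add_left, (hR.isSymmetric hD).apply_clm, (hS.isSymmetric hD hR).apply_clm, hSt]
    _ = ⟪(u : E), t⟫_ℂ := by
        rw [hD u ⟨D ⟨R t, ht₁⟩, ht₂⟩, ← inner_add_right, ht]

theorem IsDTimesResolvent.eq_of_perturbation {D' : E →ₗ.[ℂ] E} {R' S' B : E →L[ℂ] E}
    (hR : IsResolventOfOnePlusSq D R) (hS : IsDTimesResolvent D R S)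
    (hR' : IsResolventOfOnePlusSq D' R') (hS' : IsDTimesResolvent D' R' S')
    (hle : D'.domain ≤ D.domain) (hB : ∀ x : D'.domain, D' x = D ⟨x, hle x.2⟩ + B x) :
    S' = R ∘L B ∘L R' + S ∘L (1 - B ∘L S') := by
  ext z
  obtain ⟨hw, hw₂, hz⟩ := hR' z
  obtain ⟨hw', hS'z⟩ := hS' z
  have hu : S' z ∈ D'.domain := by rwa [hS'z]
  have hDw : D ⟨R' z, hle hw⟩ + B (R' z) = S' z := by rw [hS'z, hB ⟨R' z, hw'⟩]
  have hDu : D ⟨S' z, hle hu⟩ = z - R' z - B (S' z) := by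
    have hD'u : D' ⟨S' z, hu⟩ = z - R' z := by
      rw [← eq_sub_of_add_eq' hz]
      exact congrArg D' (Subtype.ext hS'z)
    rw [← hD'u, hB ⟨S' z, hu⟩, add_sub_cancel_right]
  calc S' z = R (S' z) + S (D ⟨S' z, hle hu⟩) :=
        (hS.resolvent_add_apply_apply hD hR ⟨S' z, hle hu⟩).symm
    _ = R (D ⟨R' z, hle hw⟩ + B (R' z)) + S (z - R' z - B (S' z)) := by rw [hDu, hDw]
    _ = R (B (R' z)) + S z - S (B (S' z)) := by
        rw [map_add, hS.resolvent_apply_apply hD hR, map_sub, map_sub]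
        abel
    _ = (R ∘L B ∘L R' + S ∘L (1 - B ∘L S') : E →L[ℂ] E) z := by simp [add_sub_assoc]

end SymmetricOperator

theorem stmt1_general (D D' : H →ₗ.[ℂ] H)
    (hD : IsSelfAdjoint D)
    (hdomeq : D'.domain = D.domain)
    (B : H →L[ℂ] H)
    (hB : ∀ x : D.domain, D' ⟨(x : H), hdomeq.symm ▸ x.2⟩ = D x + B x)
    (R R' S S' : H →L[ℂ] H)
    (hR : IsResolventOfOnePlusSq D R) (hR' : IsResolventOfOnePlusSq D' R')
    (hS : IsDTimesResolvent D R S) (hS' : IsDTimesResolvent D' R' S')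
    (hRcompact : IsCompactOperator (⇑R)) (hScompact : IsCompactOperator (⇑S)) :
    IsCompactOperator (⇑S') := by
  rw [IsDTimesResolvent.eq_of_perturbation hD.isFormalAdjoint_self hR hS hR' hS' hdomeq.le
    fun x => hB ⟨x, hdomeq ▸ x.2⟩]
  exact (hRcompact.comp_clm _).add (hScompact.comp_clm _)

/-- If `D, D'` are self-adjoint with `D' = D + B` for bounded `B`, and both `(1 + D^2)⁻¹` and
`D·(1 + D^2)⁻¹` are compact, then `D'·(1 + D'^2)⁻¹` is compact. -/
theorem stmt1 (D D' : H →ₗ.[ℂ] H)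
    (hD : IsSelfAdjoint D) (hD' : IsSelfAdjoint D')
    (hdense : Dense (D.domain : Set H)) (hdomeq : D'.domain = D.domain)
    (B : H →L[ℂ] H)
    (hB : ∀ x : D.domain, D' ⟨(x : H), hdomeq.symm ▸ x.2⟩ = D x + B x)
    (R R' S S' : H →L[ℂ] H)
    (hR : IsResolventOfOnePlusSq D R) (hR' : IsResolventOfOnePlusSq D' R')
    (hS : IsDTimesResolvent D R S) (hS' : IsDTimesResolvent D' R' S')
    (hRcompact : IsCompactOperator (⇑R)) (hScompact : IsCompactOperator (⇑S)) :
    IsCompactOperator (⇑S') :=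
  stmt1_general D D' hD hdomeq B hB R R' S S' hR hR' hS hS' hRcompact hScompact
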